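/- arXiv:2311.13589 — 2 statements merged into one kernel-verified Lean document; each statement's English description precedes it below -/
import Mathlib

section
/- Let f : [0,1] → ℝ be a probability density that is λ-Lipschitz and bounded by η, let V : ℝ → ℝ be bounded by M ≥ 0, and let 0 ≤ y ≤ y' with y' − y ≤ 1. Then |∫₀¹ V(y + r) f(r) dr − ∫₀¹ V(y' + r) f(r) dr| ≤ M(λ + 2η)(y' − y), provided additionally that V is such that the shifted integrals are well-defined (V defined on [y, y'+1]). -/
/-!
Write `δ = y' - y`. Splitting `∫₀¹ V(y + r) f(r) dr` at `r = δ` and translating the upper piece by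
`δ` lines it up with `∫₀^{1-δ} V(y' + s) f(s) ds`, so the difference of the two integrals is
`∫₀^{1-δ} V(y' + s) (f(s + δ) - f(s)) ds`, at most `Mλδ` by the Lipschitz bound, plus two strips
of width `δ` on which only `|V| ≤ M` and `f ≤ η` are available, each contributing `Mηδ`.
-/

open MeasureTheory intervalIntegral
open Set

theorem intervalIntegrable_of_abs_le {h : ℝ → ℝ} {a b C : ℝ} (hab : a ≤ b)
    (hm : AEStronglyMeasurable h) (hC : ∀ x ∈ Icc a b, |h x| ≤ C) :
    IntervalIntegrable h volume a b := by
  rw [intervalIntegrable_iff_integrableOn_Icc_of_le hab]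
  refine IntegrableOn.of_bound measure_Icc_lt_top hm.restrict C ?_
  filter_upwards [ae_restrict_mem measurableSet_Icc] with x hx
  exact hC x hx

theorem abs_integral_le_of_abs_le {h : ℝ → ℝ} {a b C : ℝ} (hab : a ≤ b)
    (hC : ∀ x ∈ Icc a b, |h x| ≤ C) : |∫ x in a..b, h x| ≤ C * (b - a) := by
  have := norm_integral_le_of_norm_le_const (f := h) fun x hx =>
    hC x (Ioc_subset_Icc_self (uIoc_of_le hab ▸ hx))
  rwa [abs_of_nonneg (sub_nonneg.2 hab)] at this

theorem abs_mul_le_of_abs_le {a b A B : ℝ} (ha : |a| ≤ A) (hb : |b| ≤ B) : |a * b| ≤ A * B :=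
  norm_mul_le_of_le (a₁ := a) (a₂ := b) ha hb

theorem integral_mul_sub_integral_shift_mul {g f : ℝ → ℝ} {a b δ : ℝ}
    (h₁ : IntervalIntegrable (fun r => g r * f r) volume a (a + δ))
    (h₂ : IntervalIntegrable (fun r => g r * f r) volume (a + δ) b)
    (h₃ : IntervalIntegrable (fun r => g (r + δ) * f r) volume a (b - δ))
    (h₄ : IntervalIntegrable (fun r => g (r + δ) * f r) volume (b - δ) b) :
    (∫ r in a..b, g r * f r) - ∫ r in a..b, g (r + δ) * f r =
      (∫ r in a..a + δ, g r * f r) + (∫ r in a..b - δ, g (r + δ) * (f (r + δ) - f r))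
        - ∫ r in b - δ..b, g (r + δ) * f r := by
  have h_shift : ∫ r in a + δ..b, g r * f r = ∫ r in a..b - δ, g (r + δ) * f (r + δ) := by
    simpa using (integral_comp_add_right (fun r => g r * f r) δ (a := a) (b := b - δ)).symm
  have h₂' : IntervalIntegrable (fun r => g (r + δ) * f (r + δ)) volume a (b - δ) := by
    simpa using h₂.comp_add_right δ
  simp only [mul_sub]
  rw [integral_sub h₂' h₃, ← integral_add_adjacent_intervals h₁ h₂, h_shift,
    ← integral_add_adjacent_intervals h₃ h₄]
  ring

theorem abs_integral_mul_sub_integral_shift_mul_le {g f : ℝ → ℝ} {a b δ M η lam : ℝ}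
    (hg : Measurable g) (hf : Measurable f) (hδ : 0 ≤ δ) (hδb : δ ≤ b - a)
    (hg_bd : ∀ x ∈ Icc a (b + δ), |g x| ≤ M) (hf_bd : ∀ x ∈ Icc a b, |f x| ≤ η)
    (hf_lip : ∀ x ∈ Icc a (b - δ), |f (x + δ) - f x| ≤ lam * δ) :
    |(∫ r in a..b, g r * f r) - ∫ r in a..b, g (r + δ) * f r| ≤
      M * (2 * η + lam * (b - a - δ)) * δ := by
  have h_strip : ∀ x ∈ Icc a b, |g x * f x| ≤ M * η := fun x hx =>
    abs_mul_le_of_abs_le (hg_bd x ⟨hx.1, by linarith [hx.2]⟩) (hf_bd x hx)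
  have h_strip' : ∀ x ∈ Icc a b, |g (x + δ) * f x| ≤ M * η := fun x hx =>
    abs_mul_le_of_abs_le (hg_bd _ ⟨by linarith [hx.1], by linarith [hx.2]⟩) (hf_bd x hx)
  have h_mid : ∀ x ∈ Icc a (b - δ), |g (x + δ) * (f (x + δ) - f x)| ≤ M * (lam * δ) :=
    fun x hx => abs_mul_le_of_abs_le (hg_bd _ ⟨by linarith [hx.1], by linarith [hx.2]⟩) (hf_lip x hx)
  have hm : AEStronglyMeasurable (fun r => g r * f r) := by fun_prop
  have hm' : AEStronglyMeasurable (fun r => g (r + δ) * f r) := by fun_prop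
  have sub₁ : Icc a (a + δ) ⊆ Icc a b := Icc_subset_Icc le_rfl (by linarith)
  have sub₂ : Icc (a + δ) b ⊆ Icc a b := Icc_subset_Icc (by linarith) le_rfl
  have sub₃ : Icc a (b - δ) ⊆ Icc a b := Icc_subset_Icc le_rfl (by linarith)
  have sub₄ : Icc (b - δ) b ⊆ Icc a b := Icc_subset_Icc (by linarith) le_rfl
  rw [integral_mul_sub_integral_shift_mul
    (intervalIntegrable_of_abs_le (by linarith) hm fun x hx => h_strip x (sub₁ hx))
    (intervalIntegrable_of_abs_le (by linarith) hm fun x hx => h_strip x (sub₂ hx))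
    (intervalIntegrable_of_abs_le (by linarith) hm' fun x hx => h_strip' x (sub₃ hx))
    (intervalIntegrable_of_abs_le (by linarith) hm' fun x hx => h_strip' x (sub₄ hx))]
  calc _ ≤ |∫ r in a..a + δ, g r * f r| + |∫ r in a..b - δ, g (r + δ) * (f (r + δ) - f r)|
          + |∫ r in b - δ..b, g (r + δ) * f r| :=
        (abs_sub _ _).trans (by gcongr; exact abs_add_le _ _)
    _ ≤ M * η * (a + δ - a) + M * (lam * δ) * (b - δ - a) + M * η * (b - (b - δ)) := by
        gcongr
        · exact abs_integral_le_of_abs_le (by linarith) fun x hx => h_strip x (sub₁ hx)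
        · exact abs_integral_le_of_abs_le (by linarith) h_mid
        · exact abs_integral_le_of_abs_le (by linarith) fun x hx => h_strip' x (sub₄ hx)
    _ = M * (2 * η + lam * (b - a - δ)) * δ := by ring

theorem shifted_integral_lipschitz_general (f V : ℝ → ℝ) (lam eta M y y' : ℝ)
    (hf_meas : Measurable f) (hV_meas : Measurable V)
    (hf_nn : ∀ r ∈ Set.Icc (0:ℝ) 1, 0 ≤ f r)
    (hf_lip : ∀ r ∈ Set.Icc (0:ℝ) 1, ∀ r' ∈ Set.Icc (0:ℝ) 1, |f r - f r'| ≤ lam * |r - r'|)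
    (hf_bd : ∀ r ∈ Set.Icc (0:ℝ) 1, f r ≤ eta)
    (hV_bd : ∀ x ∈ Set.Icc y (y' + 1), |V x| ≤ M)
    (hyy' : y ≤ y') (hdiff : y' - y ≤ 1) :
    |(∫ r in (0:ℝ)..1, V (y + r) * f r) - ∫ r in (0:ℝ)..1, V (y' + r) * f r| ≤
      M * (lam + 2 * eta) * (y' - y) := by
  have hM : 0 ≤ M := (abs_nonneg _).trans (hV_bd y ⟨le_rfl, by linarith⟩)
  have hlam : 0 ≤ lam := by
    simpa using (abs_nonneg _).trans (hf_lip 0 (by simp) 1 (by simp))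
  have h_shift (r : ℝ) : V (y' + r) = V (y + (r + (y' - y))) := by congr 1; ring
  simp only [h_shift]
  have h_estimate := abs_integral_mul_sub_integral_shift_mul_le (g := fun x => V (y + x)) (a := 0) (b := 1)
    (hV_meas.comp (measurable_const_add y)) hf_meas (sub_nonneg.2 hyy') (by simpa using hdiff)
    (fun x hx => hV_bd _ ⟨by linarith [hx.1], by linarith [hx.2]⟩)
    (fun x hx => abs_le.2 ⟨by linarith [hf_nn x hx, hf_bd x hx], hf_bd x hx⟩)
    (fun x hx => by
      simpa [abs_of_nonneg (sub_nonneg.2 hyy')] using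
        hf_lip (x + (y' - y)) ⟨by linarith [hx.1], by linarith [hx.2]⟩ x ⟨hx.1, by linarith [hx.2]⟩)
  refine h_estimate.trans ?_
  nlinarith [mul_nonneg hlam (sub_nonneg.2 hyy'), mul_nonneg hM (sub_nonneg.2 hyy')]

theorem shifted_integral_lipschitz (f V : ℝ → ℝ) (lam eta M y y' : ℝ)
    (hf_meas : Measurable f) (hV_meas : Measurable V)
    (hf_nn : ∀ r ∈ Set.Icc (0:ℝ) 1, 0 ≤ f r)
    (hf_density : ∫ r in (0:ℝ)..1, f r = 1)
    (hf_lip : ∀ r ∈ Set.Icc (0:ℝ) 1, ∀ r' ∈ Set.Icc (0:ℝ) 1, |f r - f r'| ≤ lam * |r - r'|)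
    (hf_bd : ∀ r ∈ Set.Icc (0:ℝ) 1, f r ≤ eta)
    (hM : 0 ≤ M)
    (hV_bd : ∀ x ∈ Set.Icc y (y' + 1), |V x| ≤ M)
    (hy : 0 ≤ y) (hyy' : y ≤ y') (hdiff : y' - y ≤ 1) :
    |(∫ r in (0:ℝ)..1, V (y + r) * f r) - ∫ r in (0:ℝ)..1, V (y' + r) * f r| ≤
      M * (lam + 2 * eta) * (y' - y) :=
  shifted_integral_lipschitz_general f V lam eta M y y' hf_meas hV_meas hf_nn hf_lip hf_bd hV_bd
    hyy' hdiff
end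

section
/- Let U : [0,H] → ℝ be continuous and strictly increasing with U(0) = 0, and consider a finite-horizon MDP on finite state and action spaces with rewards in [0,1]. Define value functions on the enlarged state space (s,y) by the backward recursion V_{H+1}(s,y) = U(y) and V_h(s,y) = max_{a} E_{s'∼P_h(·|s,a), r∼R_h(·|s,a)}[V_{h+1}(s', y + r)]. Then V_1(s,0) equals the supremum over all history-dependent policies ψ of E^ψ[U(Σ_{h=1}^H r_h) | s_1 = s], and the greedy Markovian policy on the enlarged state space attains it. -/
/-!
Clamp `U` to `G := U ∘ projIcc 0 H`, which is monotone and takes values in `[0, U H]`. The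
backward recursion for `G`, indexed by the number of remaining steps, then produces value
functions that are again monotone in the accumulated reward `y` (hence measurable) and bounded,
so all integrals are honest, and they agree with `V` wherever `y` is reachable, since rewards lie
in `[0, 1]`. Along any history, by induction on the remaining steps, a policy's value is at most
the recursion's value at the accumulated reward, with equality for the policy that picks a
maximising action for the enlarged state `(s, y)`.
-/

open MeasureTheory

/-- Expected utility of following history-dependent policy `ψ` for `n` remaining steps,
given the past trajectory `g` (a list of (state, action, reward) triples) and current
state `s`.  The timestamp is `g.length + 1`. At the end the utility `U` of the total
accumulated reward is collected. -/
noncomputable def histValue {S A : Type*} [Fintype S]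
    (P : ℕ → S → A → S → ℝ) (R : ℕ → S → A → Measure ℝ) (U : ℝ → ℝ)
    (ψ : List (S × A × ℝ) → S → A) : ℕ → List (S × A × ℝ) → S → ℝ
  | 0, g, _ => U ((g.map (fun t => t.2.2)).sum)
  | n + 1, g, s =>
      ∑ s' : S, P (g.length + 1) s (ψ g s) s' *
        ∫ r, histValue P R U ψ n (g ++ [(s, ψ g s, r)]) s' ∂(R (g.length + 1) s (ψ g s))

open Set

theorem Monotone.integrable_of_mem_Icc {μ : Measure ℝ} [IsFiniteMeasure μ] {f : ℝ → ℝ} {a b : ℝ}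
    (hf : Monotone f) (hfab : ∀ x, f x ∈ Icc a b) : Integrable f μ :=
  .of_bound hf.measurable.aestronglyMeasurable (max |a| |b|) <| .of_forall fun x =>
    abs_le_max_abs_abs (hfab x).1 (hfab x).2

section Bellman

variable {S A : Type*} [Fintype S] (P : ℕ → S → A → S → ℝ) (R : ℕ → S → A → Measure ℝ)

noncomputable def qValue (h : ℕ) (W : S → ℝ → ℝ) (s : S) (y : ℝ) (a : A) : ℝ :=
  ∑ s' : S, P h s a s' * ∫ r, W s' (y + r) ∂(R h s a)

variable {P R} {h : ℕ} {W : S → ℝ → ℝ} {C : ℝ}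

theorem qValue_mem_Icc [∀ h s a, IsProbabilityMeasure (R h s a)]
    (hPnn : ∀ h s a s', 0 ≤ P h s a s') (hPsum : ∀ h s a, ∑ s' : S, P h s a s' = 1)
    (hW : ∀ s, Monotone (W s)) (hWC : ∀ s y, W s y ∈ Icc 0 C) (s : S) (y : ℝ) (a : A) :
    qValue P R h W s y a ∈ Icc 0 C :=
  (convex_Icc 0 C).sum_mem (fun s' _ => hPnn h s a s') (hPsum h s a) fun s' _ =>
    (convex_Icc 0 C).integral_mem isClosed_Icc (.of_forall fun r => hWC s' (y + r))
      (((hW s').comp fun _ _ hr => add_le_add_right hr y).integrable_of_mem_Icc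
        fun r => hWC s' (y + r))

theorem qValue_monotone [∀ h s a, IsFiniteMeasure (R h s a)]
    (hPnn : ∀ h s a s', 0 ≤ P h s a s')
    (hW : ∀ s, Monotone (W s)) (hWC : ∀ s y, W s y ∈ Icc 0 C) (s : S) (a : A) :
    Monotone fun y => qValue P R h W s y a := by
  have hint (s' : S) (y : ℝ) : Integrable (fun r => W s' (y + r)) (R h s a) :=
    ((hW s').comp fun _ _ hr => add_le_add_right hr y).integrable_of_mem_Icc
      fun r => hWC s' (y + r)
  intro y z hyz
  refine Finset.sum_le_sum fun s' _ => mul_le_mul_of_nonneg_left ?_ (hPnn h s a s')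
  exact integral_mono (hint s' y) (hint s' z) fun r => hW s' (add_le_add_left hyz r)

variable [Fintype A] [Nonempty A]

variable (P R) in
noncomputable def bellman (h : ℕ) (W : S → ℝ → ℝ) (s : S) (y : ℝ) : ℝ :=
  Finset.univ.sup' Finset.univ_nonempty (qValue P R h W s y)

variable (P R) in
noncomputable def greedyAction (h : ℕ) (W : S → ℝ → ℝ) (s : S) (y : ℝ) : A :=
  (Finset.univ.exists_mem_eq_sup' Finset.univ_nonempty (qValue P R h W s y)).choose

theorem bellman_eq_qValue_greedyAction (s : S) (y : ℝ) :
    bellman P R h W s y = qValue P R h W s y (greedyAction P R h W s y) :=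
  (Finset.univ.exists_mem_eq_sup' Finset.univ_nonempty (qValue P R h W s y)).choose_spec.2

theorem qValue_le_bellman (s : S) (y : ℝ) (a : A) : qValue P R h W s y a ≤ bellman P R h W s y :=
  Finset.le_sup' _ (Finset.mem_univ a)

theorem bellman_mem_Icc [∀ h s a, IsProbabilityMeasure (R h s a)]
    (hPnn : ∀ h s a s', 0 ≤ P h s a s') (hPsum : ∀ h s a, ∑ s' : S, P h s a s' = 1)
    (hW : ∀ s, Monotone (W s)) (hWC : ∀ s y, W s y ∈ Icc 0 C) (s : S) (y : ℝ) :
    bellman P R h W s y ∈ Icc 0 C := by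
  rw [bellman_eq_qValue_greedyAction]
  exact qValue_mem_Icc hPnn hPsum hW hWC s y _

theorem bellman_monotone [∀ h s a, IsFiniteMeasure (R h s a)]
    (hPnn : ∀ h s a s', 0 ≤ P h s a s')
    (hW : ∀ s, Monotone (W s)) (hWC : ∀ s y, W s y ∈ Icc 0 C) (s : S) :
    Monotone (bellman P R h W s) := fun _ _ hyz =>
  Finset.sup'_mono_fun fun a _ => qValue_monotone hPnn hW hWC s a hyz

variable (P R) in
/-- The optimal value on the enlarged state `(s, y)` with `n` steps to go, i.e. at time
`H + 1 - n`. -/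
noncomputable def optValue (H : ℕ) (G : ℝ → ℝ) : ℕ → S → ℝ → ℝ
  | 0 => fun _ => G
  | n + 1 => bellman P R (H - n) (optValue H G n)

theorem optValue_monotone_and_mem_Icc [∀ h s a, IsProbabilityMeasure (R h s a)]
    (hPnn : ∀ h s a s', 0 ≤ P h s a s') (hPsum : ∀ h s a, ∑ s' : S, P h s a s' = 1)
    {H : ℕ} {G : ℝ → ℝ} (hG : Monotone G) (hGC : ∀ y, G y ∈ Icc 0 C) (n : ℕ) :
    (∀ s, Monotone (optValue P R H G n s)) ∧ ∀ s y, optValue P R H G n s y ∈ Icc 0 C := by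
  induction n with
  | zero => exact ⟨fun _ => hG, fun _ => hGC⟩
  | succ n ih =>
    exact ⟨bellman_monotone hPnn ih.1 ih.2, bellman_mem_Icc hPnn hPsum ih.1 ih.2⟩

theorem eq_optValue_of_bellman_recursion {U G : ℝ → ℝ} {H : ℕ}
    (hsupp : ∀ h s a, ∀ᵐ r ∂(R h s a), r ∈ Icc (0 : ℝ) 1)
    (hUG : ∀ y ∈ Icc 0 (H : ℝ), U y = G y) {V : ℕ → S → ℝ → ℝ}
    (hVbd : ∀ s y, V (H + 1) s y = U y)
    (hVrec : ∀ h, 1 ≤ h → h ≤ H → ∀ s y, V h s y = bellman P R h (V (h + 1)) s y)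
    (n : ℕ) (hn : n ≤ H) (s : S) (y : ℝ) (hy : y ∈ Icc 0 ((H : ℝ) - n)) :
    V (H + 1 - n) s y = optValue P R H G n s y := by
  induction n generalizing s y with
  | zero => exact (hVbd s y).trans (hUG y (by simpa using hy))
  | succ n ih =>
    rw [show H + 1 - (n + 1) = H - n by omega, hVrec (H - n) (by omega) (by omega),
      show H - n + 1 = H + 1 - n by omega, optValue]
    refine Finset.sup'_congr _ rfl fun a _ => Finset.sum_congr rfl fun s' _ => ?_
    congr 1
    refine integral_congr_ae ?_
    filter_upwards [hsupp (H - n) s a] with r hr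
    push_cast at hy
    exact ih (by omega) s' (y + r) ⟨by linarith [hy.1, hr.1], by linarith [hy.2, hr.2]⟩

end Bellman

section Histories

variable {S A : Type*}

def rewardSum (g : List (S × A × ℝ)) : ℝ := (g.map fun t => t.2.2).sum

@[simp]
theorem rewardSum_nil : rewardSum ([] : List (S × A × ℝ)) = 0 := rfl

theorem rewardSum_append_singleton (g : List (S × A × ℝ)) (s : S) (a : A) (r : ℝ) :
    rewardSum (g ++ [(s, a, r)]) = rewardSum g + r := by
  simp [rewardSum]

theorem rewardSum_append_singleton_mem_Icc {g : List (S × A × ℝ)}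
    (hg : rewardSum g ∈ Icc 0 (g.length : ℝ)) (s : S) (a : A) {r : ℝ} (hr : r ∈ Icc 0 1) :
    rewardSum (g ++ [(s, a, r)]) ∈ Icc 0 ((g ++ [(s, a, r)]).length : ℝ) := by
  rw [rewardSum_append_singleton, List.length_append, List.length_singleton, Nat.cast_add,
    Nat.cast_one]
  exact ⟨add_nonneg hg.1 hr.1, add_le_add hg.2 hr.2⟩

variable [Fintype S] [Fintype A] [Nonempty A]
  {P : ℕ → S → A → S → ℝ} {R : ℕ → S → A → Measure ℝ} {U G : ℝ → ℝ} {H : ℕ}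

variable (P R) in
noncomputable def greedyPolicy (H : ℕ) (G : ℝ → ℝ) : List (S × A × ℝ) → S → A := fun g s =>
  greedyAction P R (g.length + 1) (optValue P R H G (H - (g.length + 1))) s (rewardSum g)

theorem histValue_le_optValue {C : ℝ} [∀ h s a, IsProbabilityMeasure (R h s a)]
    (hPnn : ∀ h s a s', 0 ≤ P h s a s') (hPsum : ∀ h s a, ∑ s' : S, P h s a s' = 1)
    (hsupp : ∀ h s a, ∀ᵐ r ∂(R h s a), r ∈ Icc (0 : ℝ) 1)
    (hG : Monotone G) (hGC : ∀ y, G y ∈ Icc 0 C) (hUG : ∀ y ∈ Icc 0 (H : ℝ), U y = G y)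
    (ψ : List (S × A × ℝ) → S → A) (n : ℕ) (g : List (S × A × ℝ)) (s : S)
    (hlen : g.length + n = H) (hg : rewardSum g ∈ Icc 0 (g.length : ℝ)) :
    histValue P R U ψ n g s ≤ optValue P R H G n s (rewardSum g) := by
  induction n generalizing g s with
  | zero =>
    refine (hUG _ ⟨hg.1, ?_⟩).le
    exact hg.2.trans (by exact_mod_cast hlen.le)
  | succ n ih =>
    obtain ⟨hmono, hmem⟩ :=
      optValue_monotone_and_mem_Icc (P := P) (R := R) (H := H) hPnn hPsum hG hGC n
    have htime : g.length + 1 = H - n := by omega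
    refine le_trans ?_ (qValue_le_bellman _ _ (ψ g s))
    rw [histValue, qValue, htime]
    refine Finset.sum_le_sum fun s' _ => mul_le_mul_of_nonneg_left ?_ (hPnn _ _ _ _)
    have hle : ∀ᵐ r ∂(R (H - n) s (ψ g s)), histValue P R U ψ n (g ++ [(s, ψ g s, r)]) s'
        ≤ optValue P R H G n s' (rewardSum g + r) := by
      filter_upwards [hsupp (H - n) s (ψ g s)] with r hr
      rw [← rewardSum_append_singleton g s (ψ g s) r]
      exact ih _ s' (by simp; omega) (rewardSum_append_singleton_mem_Icc hg s _ hr)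
    by_cases hint : Integrable (fun r => histValue P R U ψ n (g ++ [(s, ψ g s, r)]) s')
        (R (H - n) s (ψ g s))
    · exact integral_mono_ae hint (((hmono s').comp fun _ _ hr =>
        add_le_add_right hr _).integrable_of_mem_Icc fun r => hmem s' _) hle
    · -- `ψ` need not be measurable in the rewards; the junk integral `0` is below `optValue ≥ 0`
      rw [integral_undef hint]
      exact integral_nonneg fun r => (hmem s' _).1

theorem histValue_greedyPolicy (hsupp : ∀ h s a, ∀ᵐ r ∂(R h s a), r ∈ Icc (0 : ℝ) 1)
    (hUG : ∀ y ∈ Icc 0 (H : ℝ), U y = G y) (n : ℕ) (g : List (S × A × ℝ)) (s : S)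
    (hlen : g.length + n = H) (hg : rewardSum g ∈ Icc 0 (g.length : ℝ)) :
    histValue P R U (greedyPolicy P R H G) n g s = optValue P R H G n s (rewardSum g) := by
  induction n generalizing g s with
  | zero => exact hUG _ ⟨hg.1, hg.2.trans (by exact_mod_cast hlen.le)⟩
  | succ n ih =>
    have htime : g.length + 1 = H - n := by omega
    have hsteps : H - (g.length + 1) = n := by omega
    set a := greedyPolicy P R H G g s
    have hstep (s' : S) : ∫ r, histValue P R U (greedyPolicy P R H G) n (g ++ [(s, a, r)]) s'
          ∂(R (g.length + 1) s a)
        = ∫ r, optValue P R H G n s' (rewardSum g + r) ∂(R (g.length + 1) s a) := by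
      refine integral_congr_ae ?_
      filter_upwards [hsupp (g.length + 1) s a] with r hr
      rw [← rewardSum_append_singleton g s a r]
      exact ih _ s' (by simp; omega) (rewardSum_append_singleton_mem_Icc hg s a hr)
    rw [histValue, Finset.sum_congr rfl fun s' _ => by rw [hstep s'], optValue, ← htime,
      bellman_eq_qValue_greedyAction, ← hsteps]
    rfl

end Histories

theorem bellman_optimality_markovian_equivalence_general
    {S A : Type*} [Fintype S] [Fintype A] [Nonempty A]
    (H : ℕ)
    (P : ℕ → S → A → S → ℝ)
    (hPnn : ∀ h s a s', 0 ≤ P h s a s') (hPsum : ∀ h s a, ∑ s' : S, P h s a s' = 1)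
    (R : ℕ → S → A → Measure ℝ) (hR : ∀ h s a, IsProbabilityMeasure (R h s a))
    (hsupp : ∀ h s a, (R h s a) (Set.Icc (0:ℝ) 1)ᶜ = 0)
    (U : ℝ → ℝ)
    (hUmono : StrictMonoOn U (Set.Icc 0 (H : ℝ)))
    (hU0 : U 0 = 0)
    (V : ℕ → S → ℝ → ℝ)
    (hVbd : ∀ s y, V (H + 1) s y = U y)
    (hVrec : ∀ h, 1 ≤ h → h ≤ H → ∀ s y,
      V h s y = Finset.univ.sup' Finset.univ_nonempty
        (fun a => ∑ s' : S, P h s a s' * ∫ r, V (h + 1) s' (y + r) ∂(R h s a))) :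
    ∀ s : S,
      IsGreatest (Set.range (fun ψ : List (S × A × ℝ) → S → A => histValue P R U ψ H [] s))
        (V 1 s 0) := by
  intro s
  have hH : (0 : ℝ) ≤ H := H.cast_nonneg
  have hUmono' := hUmono.monotoneOn
  set G : ℝ → ℝ := fun y => U (projIcc 0 (H : ℝ) hH y)
  have hG : Monotone G := fun y z hyz =>
    hUmono' (projIcc _ _ hH y).2 (projIcc _ _ hH z).2 (monotone_projIcc hH hyz)
  have hGC (y : ℝ) : G y ∈ Icc 0 (U H) :=
    ⟨hU0 ▸ hUmono' (left_mem_Icc.2 hH) (projIcc _ _ hH y).2 (projIcc _ _ hH y).2.1,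
      hUmono' (projIcc _ _ hH y).2 (right_mem_Icc.2 hH) (projIcc _ _ hH y).2.2⟩
  have hUG (y : ℝ) (hy : y ∈ Icc 0 (H : ℝ)) : U y = G y := by simp [G, projIcc_of_mem hH hy]
  have hae (h : ℕ) (s : S) (a : A) : ∀ᵐ r ∂(R h s a), r ∈ Icc (0 : ℝ) 1 :=
    mem_ae_iff.2 (hsupp h s a)
  have hV : V 1 s 0 = optValue P R H G H s 0 := by
    simpa using eq_optValue_of_bellman_recursion hae hUG hVbd hVrec H le_rfl s 0 (by simp)
  refine ⟨⟨greedyPolicy P R H G, ?_⟩, ?_⟩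
  · simpa [hV] using histValue_greedyPolicy hae hUG H [] s (by simp) (by simp)
  · rintro _ ⟨ψ, rfl⟩
    simpa [hV] using histValue_le_optValue hPnn hPsum hae hG hGC hUG ψ H [] s (by simp) (by simp)

theorem bellman_optimality_markovian_equivalence
    {S A : Type*} [Fintype S] [Fintype A] [Nonempty S] [Nonempty A]
    (H : ℕ) (hH : 1 ≤ H)
    (P : ℕ → S → A → S → ℝ)
    (hPnn : ∀ h s a s', 0 ≤ P h s a s') (hPsum : ∀ h s a, ∑ s' : S, P h s a s' = 1)
    (R : ℕ → S → A → Measure ℝ) (hR : ∀ h s a, IsProbabilityMeasure (R h s a))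
    (hsupp : ∀ h s a, (R h s a) (Set.Icc (0:ℝ) 1)ᶜ = 0)
    (U : ℝ → ℝ)
    (hUcont : ContinuousOn U (Set.Icc 0 (H : ℝ)))
    (hUmono : StrictMonoOn U (Set.Icc 0 (H : ℝ)))
    (hU0 : U 0 = 0)
    (V : ℕ → S → ℝ → ℝ)
    (hVbd : ∀ s y, V (H + 1) s y = U y)
    (hVrec : ∀ h, 1 ≤ h → h ≤ H → ∀ s y,
      V h s y = Finset.univ.sup' Finset.univ_nonempty
        (fun a => ∑ s' : S, P h s a s' * ∫ r, V (h + 1) s' (y + r) ∂(R h s a))) :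
    ∀ s : S,
      IsGreatest (Set.range (fun ψ : List (S × A × ℝ) → S → A => histValue P R U ψ H [] s))
        (V 1 s 0) :=
  bellman_optimality_markovian_equivalence_general H P hPnn hPsum R hR hsupp U hUmono hU0 V hVbd
    hVrec
end
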